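/- arXiv:1510.06128 — 3 statements merged into one kernel-verified Lean document; each statement's English description precedes it below -/
import Mathlib

section
/- For all real constants a and b, the limit as x → ∞ (over positive reals) of Γ(x+a) / (Γ(x+b) · x^{a-b}) equals 1. -/
/-!
By the Bohr–Mollerup description, `log ∘ Gamma` is convex on `(0, ∞)` and satisfies
`f (y + 1) = f y + log y`. Comparing the slope of `f` on `[y, y + c]` with its slopes on the
adjacent unit intervals `[y - 1, y]` and `[y + c, y + c + 1]` pins `f (y + c) - f y` between
`c * log (y - 1)` and `c * log (y + c)`, and both bounds are `c * log y + o(1)`.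
-/

open Filter Real Set Topology

namespace Real.BohrMollerup

section ConvexFeq

variable {f : ℝ → ℝ} (hf_conv : ConvexOn ℝ (Ioi 0) f)
  (hf_feq : ∀ {y : ℝ}, 0 < y → f (y + 1) = f y + log y)
include hf_conv hf_feq

theorem mul_log_sub_one_le_sub {c y : ℝ} (hc : 0 < c) (hy : 1 < y) :
    c * log (y - 1) ≤ f (y + c) - f y := by
  have hslope := hf_conv.slope_mono_adjacent (x := y - 1) (y := y) (z := y + c)
    (mem_Ioi.2 (by linarith)) (mem_Ioi.2 (by linarith)) (by linarith) (by linarith)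
  have hstep : f y - f (y - 1) = log (y - 1) := by
    have := hf_feq (y := y - 1) (by linarith)
    rw [sub_add_cancel] at this
    linarith
  rwa [sub_sub_cancel, div_one, hstep, add_sub_cancel_left, le_div_iff₀ hc, mul_comm] at hslope

theorem sub_le_mul_log_add {c y : ℝ} (hc : 0 < c) (hy : 0 < y) :
    f (y + c) - f y ≤ c * log (y + c) := by
  have hslope := hf_conv.slope_mono_adjacent (x := y) (y := y + c) (z := y + c + 1)
    (mem_Ioi.2 hy) (mem_Ioi.2 (by linarith)) (by linarith) (by linarith)
  rwa [add_sub_cancel_left, add_sub_cancel_left, div_one, hf_feq (by linarith), add_sub_cancel_left,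
    div_le_iff₀ hc, mul_comm] at hslope

theorem tendsto_sub_sub_mul_log_of_lt {a b : ℝ} (hab : b < a) :
    Tendsto (fun x => f (x + a) - f (x + b) - (a - b) * log x) atTop (𝓝 0) := by
  have hc : 0 < a - b := sub_pos.2 hab
  have hlower := (tendsto_log_comp_add_sub_log (b - 1)).const_mul (a - b)
  have hupper := (tendsto_log_comp_add_sub_log a).const_mul (a - b)
  rw [mul_zero] at hlower hupper
  refine tendsto_of_tendsto_of_tendsto_of_le_of_le' hlower hupper ?_ ?_ <;>
    filter_upwards [eventually_gt_atTop (1 - b)] with x hx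
  · have := mul_log_sub_one_le_sub hf_conv hf_feq hc (y := x + b) (by linarith)
    rw [show x + b + (a - b) = x + a by ring, show x + b - 1 = x + (b - 1) by ring] at this
    linarith
  · have := sub_le_mul_log_add hf_conv hf_feq hc (y := x + b) (by linarith)
    rw [show x + b + (a - b) = x + a by ring] at this
    linarith

theorem tendsto_sub_sub_mul_log (a b : ℝ) :
    Tendsto (fun x => f (x + a) - f (x + b) - (a - b) * log x) atTop (𝓝 0) := by
  rcases lt_trichotomy a b with hab | rfl | hab
  · have := (tendsto_sub_sub_mul_log_of_lt hf_conv hf_feq hab).neg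
    rw [neg_zero] at this
    exact this.congr fun x => by ring
  · simp
  · exact tendsto_sub_sub_mul_log_of_lt hf_conv hf_feq hab

end ConvexFeq

end Real.BohrMollerup

theorem Real.log_Gamma_add_one {y : ℝ} (hy : 0 < y) :
    log (Gamma (y + 1)) = log (Gamma y) + log y := by
  rw [Gamma_add_one hy.ne', log_mul hy.ne' (Gamma_pos_of_pos hy).ne', add_comm]

theorem Real.exp_log_Gamma_sub_log_Gamma_sub_mul_log {x a b : ℝ} (hx : 0 < x) (ha : 0 < x + a)
    (hb : 0 < x + b) :
    exp (log (Gamma (x + a)) - log (Gamma (x + b)) - (a - b) * log x) =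
      Gamma (x + a) / (Gamma (x + b) * x ^ (a - b)) := by
  rw [exp_sub, exp_sub, exp_log (Gamma_pos_of_pos ha), exp_log (Gamma_pos_of_pos hb), mul_comm,
    ← rpow_def_of_pos hx, div_div]

theorem gamma_ratio_asymptotics (a b : ℝ) :
    Filter.Tendsto (fun x : ℝ => Real.Gamma (x + a) / (Real.Gamma (x + b) * x ^ (a - b)))
      Filter.atTop (nhds 1) := by
  have hlog := BohrMollerup.tendsto_sub_sub_mul_log (f := log ∘ Gamma) convexOn_log_Gamma
    log_Gamma_add_one a b
  have hexp := (continuous_exp.tendsto 0).comp hlog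
  rw [exp_zero] at hexp
  refine hexp.congr' ?_
  filter_upwards [eventually_gt_atTop 0, eventually_gt_atTop (-a), eventually_gt_atTop (-b)]
    with x hx ha hb
  exact exp_log_Gamma_sub_log_Gamma_sub_mul_log hx (by linarith) (by linarith)
end

section
/- Let N be a positive integer and r_1, …, r_N ≥ 0 real numbers. Then ∫_{[0,2π]^N} | det_{1≤k,j≤N} [ (r_k e^{iθ_k})^{\,j-1} ] |² dθ_1 ⋯ dθ_N = (2π)^N · per_{1≤i,j≤N} [ r_i^{2(j-1)} ], where per denotes the permanent. -/
/-!
Expand `|det M|² = det M · conj (det M)` over pairs of permutations `σ, τ`. When the entries of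
row `k` depend only on `θ_k`, Fubini turns the integral of each term into a product of
one-variable integrals `∫ f_{k,σ k} · conj f_{k,τ k}`. If every row consists of orthogonal
functions, all terms with `σ ≠ τ` vanish, the signs of the surviving diagonal terms square to
`1`, and what remains is the permanent of the matrix of squared norms `∫ |f_{k,j}|²`.
For `f_{k,j}(θ) = (r_k e^{iθ})^j` on `[0, 2π]` the product of columns `a, b` is
`r_k^{a+b} e^{i(a-b)θ}`, so orthogonality is that of the Fourier characters, and the squared
norms are `2π r_k^{2j}`.
-/

open MeasureTheory ComplexConjugate Equiv

namespace Matrix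

variable {ι : Type*} [Fintype ι] [DecidableEq ι]

theorem sq_norm_det_eq_sum_sum_perm (M : Matrix ι ι ℂ) :
    ((‖M.det‖ ^ 2 : ℝ) : ℂ) = ∑ σ : Perm ι, ∑ τ : Perm ι,
      ((Perm.sign σ : ℤ) * (Perm.sign τ : ℤ) : ℂ) *
        ∏ k, M k (σ k) * conj (M k (τ k)) := by
  rw [Complex.ofReal_pow, ← Complex.mul_conj', ← det_transpose, det_apply', map_sum,
    Finset.sum_mul_sum]
  refine Finset.sum_congr rfl fun σ _ => Finset.sum_congr rfl fun τ _ => ?_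
  simp only [map_mul, map_prod, map_intCast, transpose_apply, Finset.prod_mul_distrib]
  ring

end Matrix

open Matrix

section Orthogonality

variable {ι α : Type*} [Fintype ι] [DecidableEq ι] [MeasurableSpace α] {μ : Measure α}
  [SigmaFinite μ] {f : ι → ι → α → ℂ}

theorem integral_prod_mul_conj_perm
    (horth : ∀ k a b, a ≠ b → ∫ x, f k a x * conj (f k b x) ∂μ = 0) (σ τ : Perm ι) :
    ∫ θ, ∏ k, f k (σ k) (θ k) * conj (f k (τ k) (θ k)) ∂Measure.pi (fun _ => μ) =
      if σ = τ then ∏ k, ((∫ x, ‖f k (σ k) x‖ ^ 2 ∂μ : ℝ) : ℂ) else 0 := by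
  rw [integral_fintype_prod_eq_prod (fun k x => f k (σ k) x * conj (f k (τ k) x))]
  split_ifs with h
  · subst h
    refine Finset.prod_congr rfl fun k _ => ?_
    simp_rw [Complex.mul_conj', ← Complex.ofReal_pow, integral_complex_ofReal]
  · obtain ⟨k, hk⟩ : ∃ k, σ k ≠ τ k := not_forall.mp (mt Perm.ext h)
    exact Finset.prod_eq_zero (Finset.mem_univ k) (horth k _ _ hk)

theorem integral_sq_norm_det_eq_permanent
    (hint : ∀ k a b, Integrable (fun x => f k a x * conj (f k b x)) μ)
    (horth : ∀ k a b, a ≠ b → ∫ x, f k a x * conj (f k b x) ∂μ = 0) :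
    ∫ θ, ‖(of fun k j => f k j (θ k)).det‖ ^ 2 ∂Measure.pi (fun _ => μ) =
      (of fun k j => ∫ x, ‖f k j x‖ ^ 2 ∂μ).permanent := by
  have hint_prod : ∀ σ τ : Perm ι, Integrable
      (fun θ : ι → α => ∏ k, f k (σ k) (θ k) * conj (f k (τ k) (θ k)))
      (Measure.pi fun _ => μ) :=
    fun σ τ => Integrable.fintype_prod fun k => hint k (σ k) (τ k)
  apply Complex.ofReal_injective
  rw [← integral_complex_ofReal]
  simp_rw [sq_norm_det_eq_sum_sum_perm, of_apply]
  rw [integral_finsetSum _ fun σ _ =>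
    integrable_finsetSum _ fun τ _ => (hint_prod σ τ).const_mul _]
  simp_rw [integral_finsetSum _ fun τ _ => (hint_prod _ τ).const_mul _, integral_const_mul,
    integral_prod_mul_conj_perm horth, mul_ite, mul_zero, Finset.sum_ite_eq, Finset.mem_univ,
    if_true]
  rw [← permanent_transpose, permanent]
  push_cast
  refine Finset.sum_congr rfl fun σ _ => ?_
  simp [← Int.cast_mul, ← Units.val_mul]

end Orthogonality

theorem integral_exp_int_mul_I_Icc_zero_two_pi {n : ℤ} (hn : n ≠ 0) :
    ∫ θ in Set.Icc (0 : ℝ) (2 * Real.pi), Complex.exp (n * Complex.I * θ) = 0 := by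
  rw [integral_Icc_eq_integral_Ioc, ← intervalIntegral.integral_of_le (by positivity),
    integral_exp_mul_complex (by simp [hn])]
  have : (n : ℂ) * Complex.I * (2 * Real.pi : ℝ) = n * (2 * Real.pi * Complex.I) := by
    push_cast; ring
  rw [this, Complex.exp_int_mul_two_pi_mul_I]
  simp

theorem phase_pow_mul_conj_phase_pow (r θ : ℝ) (a b : ℕ) :
    ((r : ℂ) * Complex.exp (Complex.I * θ)) ^ a *
        conj (((r : ℂ) * Complex.exp (Complex.I * θ)) ^ b) =
      (r : ℂ) ^ (a + b) * Complex.exp (((a : ℤ) - (b : ℤ) : ℤ) * Complex.I * θ) := by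
  rw [map_pow, map_mul, Complex.conj_ofReal, ← Complex.exp_conj, map_mul, Complex.conj_I,
    Complex.conj_ofReal, mul_pow, mul_pow, ← Complex.exp_nat_mul, ← Complex.exp_nat_mul,
    mul_mul_mul_comm, ← pow_add, ← Complex.exp_add]
  push_cast
  ring_nf

theorem integral_sq_norm_phase_pow (r : ℝ) (j : ℕ) :
    ∫ θ in Set.Icc (0 : ℝ) (2 * Real.pi), ‖((r : ℂ) * Complex.exp (Complex.I * θ)) ^ j‖ ^ 2 =
      2 * Real.pi * r ^ (2 * j) := by
  have hnorm : ∀ θ : ℝ, ‖((r : ℂ) * Complex.exp (Complex.I * θ)) ^ j‖ ^ 2 = r ^ (2 * j) := by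
    intro θ
    rw [norm_pow, norm_mul, mul_comm Complex.I, Complex.norm_exp_ofReal_mul_I, mul_one,
      Complex.norm_real, Real.norm_eq_abs, ← pow_mul, mul_comm, pow_mul, sq_abs, ← pow_mul]
  simp_rw [hnorm, setIntegral_const, Real.volume_real_Icc_of_le Real.two_pi_pos.le, sub_zero,
    smul_eq_mul]

theorem phase_integral_vandermonde_sq_eq_permanent_general (N : ℕ)
    (r : Fin N → ℝ) :
    ∫ θ : Fin N → ℝ in Set.univ.pi fun _ => Set.Icc (0 : ℝ) (2 * Real.pi),
        ‖(Matrix.det (Matrix.of fun k j : Fin N =>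
              ((r k : ℂ) * Complex.exp (Complex.I * θ k)) ^ (j : ℕ)))‖ ^ 2 =
      (2 * Real.pi) ^ N *
        ∑ σ : Equiv.Perm (Fin N), ∏ i : Fin N, r i ^ (2 * (σ i : ℕ)) := by
  rw [volume_pi, Measure.restrict_pi_pi, integral_sq_norm_det_eq_permanent
    (f := fun k (j : Fin N) (x : ℝ) => ((r k : ℂ) * Complex.exp (Complex.I * x)) ^ (j : ℕ))]
  · have hgram : (of fun (k j : Fin N) => ∫ x in Set.Icc (0 : ℝ) (2 * Real.pi),
          ‖((r k : ℂ) * Complex.exp (Complex.I * x)) ^ (j : ℕ)‖ ^ 2) =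
        (2 * Real.pi) • of fun (k j : Fin N) => r k ^ (2 * (j : ℕ)) := by
      ext k j
      rw [of_apply, integral_sq_norm_phase_pow, Matrix.smul_apply, of_apply, smul_eq_mul]
    rw [hgram, permanent_smul, Fintype.card_fin, ← permanent_transpose]
    rfl
  · intro k a b
    simp_rw [phase_pow_mul_conj_phase_pow]
    exact (by fun_prop : Continuous _).integrableOn_Icc
  · intro k a b hab
    simp_rw [phase_pow_mul_conj_phase_pow]
    rw [integral_const_mul, integral_exp_int_mul_I_Icc_zero_two_pi (by omega), mul_zero]

theorem phase_integral_vandermonde_sq_eq_permanent (N : ℕ) (hN : 0 < N)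
    (r : Fin N → ℝ) (hr : ∀ i, 0 ≤ r i) :
    ∫ θ : Fin N → ℝ in Set.univ.pi fun _ => Set.Icc (0 : ℝ) (2 * Real.pi),
        ‖(Matrix.det (Matrix.of fun k j : Fin N =>
              ((r k : ℂ) * Complex.exp (Complex.I * θ k)) ^ (j : ℕ)))‖ ^ 2 =
      (2 * Real.pi) ^ N *
        ∑ σ : Equiv.Perm (Fin N), ∏ i : Fin N, r i ^ (2 * (σ i : ℕ)) :=
  phase_integral_vandermonde_sq_eq_permanent_general N r
end

section
/- Andréief's integration formula: Let (Ω, μ) be a measure space, N a positive integer, and f_1, …, f_N, g_1, …, g_N : Ω → ℂ measurable functions such that all products f_i g_j are μ-integrable. Then ∫_{Ω^N} det_{1≤i,j≤N}[f_i(x_j)] · det_{1≤i,j≤N}[g_i(x_j)] dμ(x_1)⋯dμ(x_N) = N! · det_{1≤i,j≤N} [ ∫_Ω f_i(x) g_j(x) dμ(x) ]. -/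
/-! Expanding both determinants over permutations writes the integrand as a signed sum of
products `∏ⱼ f_{σ j}(x_j) g_{τ j}(x_j)`, each of which integrates by Fubini to
`∏ⱼ A_{σ j, τ j}` with `A_{ij} = ∫ f_i g_j`. For fixed `σ`, the signed sum over `τ` is
`sign σ · det (A with rows permuted by σ) = (sign σ)² · det A = det A`, so the `N!` choices of
`σ` give `N! · det A`. -/

open MeasureTheory Equiv Finset

namespace Matrix

variable {n R : Type*} [Fintype n] [DecidableEq n] [CommRing R]

theorem det_mul_det_eq_sum_perm_prod (A B : Matrix n n R) :
    A.det * B.det =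
      ∑ σ : Perm n, ∑ τ : Perm n,
        (Perm.sign σ : R) * Perm.sign τ * ∏ j, A (σ j) j * B (τ j) j := by
  rw [det_apply', det_apply', sum_mul_sum]
  refine sum_congr rfl fun σ _ => sum_congr rfl fun τ _ => ?_
  rw [prod_mul_distrib]
  ring

theorem sum_perm_sign_mul_sign_prod (A : Matrix n n R) :
    ∑ σ : Perm n, ∑ τ : Perm n, (Perm.sign σ : R) * Perm.sign τ * ∏ j, A (σ j) (τ j) =
      (Fintype.card n).factorial * A.det := by
  have sum_over_columns (σ : Perm n) :
      ∑ τ : Perm n, (Perm.sign σ : R) * Perm.sign τ * ∏ j, A (σ j) (τ j) = A.det :=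
    calc ∑ τ : Perm n, (Perm.sign σ : R) * Perm.sign τ * ∏ j, A (σ j) (τ j)
        = Perm.sign σ * (A.submatrix σ id).transpose.det := by
          simp only [det_apply', mul_sum, mul_assoc]; rfl
      _ = ((Perm.sign σ * Perm.sign σ : ℤˣ) : ℤ) * A.det := by
          rw [det_transpose, det_permute]; push_cast; ring
      _ = A.det := by rw [Int.units_mul_self]; simp
  simp only [sum_over_columns, sum_const, card_univ, Fintype.card_perm, nsmul_eq_mul]

end Matrix

theorem andreief_integration_formula_general {Ω : Type*} [MeasurableSpace Ω] (μ : Measure Ω)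
    [SigmaFinite μ] (N : ℕ) (f g : Fin N → Ω → ℂ)
    (hint : ∀ i j, Integrable (fun x => f i x * g j x) μ) :
    ∫ x : Fin N → Ω,
        Matrix.det (Matrix.of fun i j : Fin N => f i (x j)) *
          Matrix.det (Matrix.of fun i j : Fin N => g i (x j)) ∂(Measure.pi fun _ => μ) =
      (N.factorial : ℂ) *
        Matrix.det (Matrix.of fun i j : Fin N => ∫ x, f i x * g j x ∂μ) := by
  have integrable_term (σ τ : Perm (Fin N)) :
      Integrable (fun x : Fin N → Ω => ∏ j, f (σ j) (x j) * g (τ j) (x j))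
        (Measure.pi fun _ => μ) :=
    Integrable.fintype_prod fun j => hint (σ j) (τ j)
  have integral_term (σ τ : Perm (Fin N)) :
      ∫ x : Fin N → Ω, ∏ j, f (σ j) (x j) * g (τ j) (x j) ∂(Measure.pi fun _ => μ) =
        ∏ j, ∫ x, f (σ j) x * g (τ j) x ∂μ :=
    integral_fintype_prod_eq_prod fun j x => f (σ j) x * g (τ j) x
  simp_rw [Matrix.det_mul_det_eq_sum_perm_prod, Matrix.of_apply]
  rw [integral_finsetSum _ fun σ _ =>
    integrable_finsetSum _ fun τ _ => (integrable_term σ τ).const_mul _]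
  simp_rw [integral_finsetSum _ fun τ _ => (integrable_term _ τ).const_mul _,
    integral_const_mul, integral_term]
  simpa using
    Matrix.sum_perm_sign_mul_sign_prod (Matrix.of fun i j : Fin N => ∫ x, f i x * g j x ∂μ)

theorem andreief_integration_formula {Ω : Type*} [MeasurableSpace Ω] (μ : Measure Ω)
    [SigmaFinite μ] (N : ℕ) (f g : Fin N → Ω → ℂ)
    (hf : ∀ i, Measurable (f i)) (hg : ∀ i, Measurable (g i))
    (hint : ∀ i j, Integrable (fun x => f i x * g j x) μ) :
    ∫ x : Fin N → Ω,
        Matrix.det (Matrix.of fun i j : Fin N => f i (x j)) *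
          Matrix.det (Matrix.of fun i j : Fin N => g i (x j)) ∂(Measure.pi fun _ => μ) =
      (N.factorial : ℂ) *
        Matrix.det (Matrix.of fun i j : Fin N => ∫ x, f i x * g j x ∂μ) :=
  andreief_integration_formula_general μ N f g hint
end
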